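/- If A ∈ {0,1}^(m×n) is Strongly Order-Regular*, then its reverse A^rev (defined by A^rev[i,k] = A[m+1-i,k] if i is odd and A^rev[i,k] = 1 - A[m+1-i,k] if i is even) is also Strongly Order-Regular*. -/
import Mathlib


/-- Successor row index, saturating at the last row (convention `A[m+1] = A[m]`). -/
def rowSucc {m : ℕ} (i : Fin m) : Fin m :=
  if h : i.1 + 1 < m then ⟨i.1 + 1, h⟩ else i

/-- The matrix `A` satisfies the Order-Regularity constraint for the pair of rows `(i, j)`:
there is a column `k` with `A[i,k] ≠ A[i+1,k] = A[j,k] = A[j+1,k]`. -/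
def SatCon {m n : ℕ} (A : Fin m → Fin n → Bool) (i j : Fin m) : Prop :=
  ∃ k : Fin n, A i k ≠ A (rowSucc i) k ∧ A (rowSucc i) k = A j k ∧ A j k = A (rowSucc j) k

/-- Order-Regularity: every pair of rows `i < j` satisfies the constraint, and the last two
rows are distinct. -/
def OrderRegular {m n : ℕ} (A : Fin m → Fin n → Bool) : Prop :=
  (∀ i j : Fin m, i < j → SatCon A i j) ∧
  ∀ _h : 2 ≤ m, A ⟨m - 2, by omega⟩ ≠ A ⟨m - 1, by omega⟩

/-- Strong Order-Regularity*. -/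
def StronglyOrderRegularStar {m n : ℕ} (A : Fin m → Fin n → Bool) : Prop :=
  (∀ i j : ℕ, ∀ _hij : i < j, ∀ hj : j + 1 < m, ∃ k : Fin n,
    A ⟨i, by omega⟩ k ≠ A ⟨i + 1, by omega⟩ k ∧
    A ⟨i + 1, by omega⟩ k = A ⟨j, by omega⟩ k ∧
    A ⟨j, by omega⟩ k = A ⟨j + 1, hj⟩ k) ∧
  (∀ i j : ℕ, ∀ _hij : i + 1 < j, ∀ hj : j + 1 < m, ∃ k : Fin n,
    A ⟨i, by omega⟩ k ≠ A ⟨i + 1, by omega⟩ k ∧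
    A ⟨i + 1, by omega⟩ k ≠ A ⟨j, by omega⟩ k ∧
    A ⟨j, by omega⟩ k = A ⟨j + 1, hj⟩ k)

/-- The reverse of `A`: reverse the order of the rows and negate the rows at even
(1-indexed) positions. -/
def revMat {m n : ℕ} (A : Fin m → Fin n → Bool) : Fin m → Fin n → Bool :=
  fun i k =>
    if i.1 % 2 = 0 then A ⟨m - 1 - i.1, by have := i.isLt; omega⟩ k
    else !(A ⟨m - 1 - i.1, by have := i.isLt; omega⟩ k)

lemma Acongr {m n : ℕ} (A : Fin m → Fin n → Bool) {a b : ℕ} (ha : a < m) (hb : b < m)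
    (h : a = b) (k : Fin n) : A ⟨a, ha⟩ k = A ⟨b, hb⟩ k := by subst h; rfl

lemma revMat_apply {m n : ℕ} (A : Fin m → Fin n → Bool) (i : ℕ) (h : i < m) (k : Fin n) :
    revMat A ⟨i, h⟩ k = xor (A ⟨m - 1 - i, by omega⟩ k) (decide (i % 2 = 1)) := by
  simp only [revMat]
  rcases Nat.even_or_odd i with hi | hi
  · rw [if_pos (Nat.even_iff.mp hi)]
    simp [Nat.even_iff.mp hi]
  · rw [if_neg (show ¬ i % 2 = 0 by have := Nat.odd_iff.mp hi; omega)]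
    simp [Nat.odd_iff.mp hi]

lemma bne_aux (x y : Bool) (h : ¬ y = x) : x = !y := by cases x <;> cases y <;> simp_all


set_option maxHeartbeats 1000000 in
theorem stmt18 {m n : ℕ} (A : Fin m → Fin n → Bool)
    (hA : StronglyOrderRegularStar A) : StronglyOrderRegularStar (revMat A) := by
  constructor
  · intro i j hij hj
    by_cases hpar : (i + j) % 2 = 1
    · obtain ⟨k, h1, h2, h3⟩ := hA.1 (m - 2 - j) (m - 2 - i) (by omega) (by omega)
      have e1 : ∀ h, A ⟨m - 1 - i, h⟩ k = A ⟨m - 2 - i + 1, by omega⟩ k :=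
        fun h => Acongr A h _ (by omega) k
      have e2 : ∀ h, A ⟨m - 1 - (i + 1), h⟩ k = A ⟨m - 2 - i, by omega⟩ k :=
        fun h => Acongr A h _ (by omega) k
      have e3 : ∀ h, A ⟨m - 1 - j, h⟩ k = A ⟨m - 2 - j + 1, by omega⟩ k :=
        fun h => Acongr A h _ (by omega) k
      have e4 : ∀ h, A ⟨m - 1 - (j + 1), h⟩ k = A ⟨m - 2 - j, by omega⟩ k :=
        fun h => Acongr A h _ (by omega) k
      refine ⟨k, ?_, ?_, ?_⟩ <;> simp only [revMat_apply, e1, e2, e3, e4] <;>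
        rcases Nat.mod_two_eq_zero_or_one i with hi | hi <;>
        rcases Nat.mod_two_eq_zero_or_one j with hj2 | hj2 <;>
        first
          | omega
          | (simp_all [Nat.succ_mod_two_eq_one_iff];
             try first
               | exact bne_aux _ _ h1
               | exact (bne_aux _ _ h1).symm
               | exact bne_aux _ _ (fun h => h1 h.symm)
               | exact (bne_aux _ _ (fun h => h1 h.symm)).symm)
    · obtain ⟨k, h1, h2, h3⟩ := hA.2 (m - 2 - j) (m - 2 - i) (by omega) (by omega)
      have e1 : ∀ h, A ⟨m - 1 - i, h⟩ k = A ⟨m - 2 - i + 1, by omega⟩ k :=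
        fun h => Acongr A h _ (by omega) k
      have e2 : ∀ h, A ⟨m - 1 - (i + 1), h⟩ k = A ⟨m - 2 - i, by omega⟩ k :=
        fun h => Acongr A h _ (by omega) k
      have e3 : ∀ h, A ⟨m - 1 - j, h⟩ k = A ⟨m - 2 - j + 1, by omega⟩ k :=
        fun h => Acongr A h _ (by omega) k
      have e4 : ∀ h, A ⟨m - 1 - (j + 1), h⟩ k = A ⟨m - 2 - j, by omega⟩ k :=
        fun h => Acongr A h _ (by omega) k
      refine ⟨k, ?_, ?_, ?_⟩ <;> simp only [revMat_apply, e1, e2, e3, e4] <;>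
        rcases Nat.mod_two_eq_zero_or_one i with hi | hi <;>
        rcases Nat.mod_two_eq_zero_or_one j with hj2 | hj2 <;>
        first
          | omega
          | (simp_all [Nat.succ_mod_two_eq_one_iff];
             try first
               | exact bne_aux _ _ h1
               | exact (bne_aux _ _ h1).symm
               | exact bne_aux _ _ (fun h => h1 h.symm)
               | exact (bne_aux _ _ (fun h => h1 h.symm)).symm
               | exact bne_aux _ _ h2
               | exact (bne_aux _ _ h2).symm
               | exact bne_aux _ _ (fun h => h2 h.symm)
               | exact (bne_aux _ _ (fun h => h2 h.symm)).symm
               | exact fun h => h1 h.symm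
               | exact fun h => h2 h.symm)
  · intro i j hij hj
    by_cases hpar : (i + j) % 2 = 1
    · obtain ⟨k, h1, h2, h3⟩ := hA.2 (m - 2 - j) (m - 2 - i) (by omega) (by omega)
      have e1 : ∀ h, A ⟨m - 1 - i, h⟩ k = A ⟨m - 2 - i + 1, by omega⟩ k :=
        fun h => Acongr A h _ (by omega) k
      have e2 : ∀ h, A ⟨m - 1 - (i + 1), h⟩ k = A ⟨m - 2 - i, by omega⟩ k :=
        fun h => Acongr A h _ (by omega) k
      have e3 : ∀ h, A ⟨m - 1 - j, h⟩ k = A ⟨m - 2 - j + 1, by omega⟩ k :=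
        fun h => Acongr A h _ (by omega) k
      have e4 : ∀ h, A ⟨m - 1 - (j + 1), h⟩ k = A ⟨m - 2 - j, by omega⟩ k :=
        fun h => Acongr A h _ (by omega) k
      refine ⟨k, ?_, ?_, ?_⟩ <;> simp only [revMat_apply, e1, e2, e3, e4] <;>
        rcases Nat.mod_two_eq_zero_or_one i with hi | hi <;>
        rcases Nat.mod_two_eq_zero_or_one j with hj2 | hj2 <;>
        first
          | omega
          | (simp_all [Nat.succ_mod_two_eq_one_iff];
             try first
               | exact bne_aux _ _ h1
               | exact (bne_aux _ _ h1).symm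
               | exact bne_aux _ _ (fun h => h1 h.symm)
               | exact (bne_aux _ _ (fun h => h1 h.symm)).symm
               | exact bne_aux _ _ h2
               | exact (bne_aux _ _ h2).symm
               | exact bne_aux _ _ (fun h => h2 h.symm)
               | exact (bne_aux _ _ (fun h => h2 h.symm)).symm
               | exact fun h => h1 h.symm
               | exact fun h => h2 h.symm)
    · obtain ⟨k, h1, h2, h3⟩ := hA.1 (m - 2 - j) (m - 2 - i) (by omega) (by omega)
      have e1 : ∀ h, A ⟨m - 1 - i, h⟩ k = A ⟨m - 2 - i + 1, by omega⟩ k :=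
        fun h => Acongr A h _ (by omega) k
      have e2 : ∀ h, A ⟨m - 1 - (i + 1), h⟩ k = A ⟨m - 2 - i, by omega⟩ k :=
        fun h => Acongr A h _ (by omega) k
      have e3 : ∀ h, A ⟨m - 1 - j, h⟩ k = A ⟨m - 2 - j + 1, by omega⟩ k :=
        fun h => Acongr A h _ (by omega) k
      have e4 : ∀ h, A ⟨m - 1 - (j + 1), h⟩ k = A ⟨m - 2 - j, by omega⟩ k :=
        fun h => Acongr A h _ (by omega) k
      refine ⟨k, ?_, ?_, ?_⟩ <;> simp only [revMat_apply, e1, e2, e3, e4] <;>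
        rcases Nat.mod_two_eq_zero_or_one i with hi | hi <;>
        rcases Nat.mod_two_eq_zero_or_one j with hj2 | hj2 <;>
        first
          | omega
          | (simp_all [Nat.succ_mod_two_eq_one_iff];
             try first
               | exact bne_aux _ _ h1
               | exact (bne_aux _ _ h1).symm
               | exact bne_aux _ _ (fun h => h1 h.symm)
               | exact (bne_aux _ _ (fun h => h1 h.symm)).symm)
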